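/- Let G be a connected weighted graph on n ≥ 2 vertices with Laplacian L_G, and let H be a weighted graph on the same vertices whose Laplacian L_H makes it a (1±ε)-spectral sparsifier of G with ε ≥ 0. Let γ > 0, l ≥ 1, and let S be any subset of {1,…,n}. Then for every f ∈ F: ‖P_F((lγ·L_H + I_S)·f)‖₂ ≥ (lγ(1−ε)λ₁ − 1)·‖f‖₂. -/

import Mathlib

/-!
For `f ⊥ 𝟙` the projection `P_F` is invisible to `f`, so `⟨f, P_F M f⟩ = ⟨f, M f⟩` with
`M = lγ L_H + I_S`. Since `I_S ⪰ 0` and `L_H ⪰ (1 - ε) L_G`, this is at least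
`lγ (1 - ε) λ₁ ‖f‖²`, and Cauchy–Schwarz turns that into
`‖P_F M f‖ ≥ lγ (1 - ε) λ₁ ‖f‖`.
When `ε > 1` the bound is trivial, as `λ₁ ≥ 0` because `L_G` is positive semidefinite.
-/


open Matrix BigOperators Finset
open scoped Classical

noncomputable section

/-- The Laplacian of a weighted graph given by its adjacency matrix. -/
def Lap {n : ℕ} (A : Matrix (Fin n) (Fin n) ℝ) : Matrix (Fin n) (Fin n) ℝ :=
  Matrix.diagonal (fun i => ∑ j, A i j) - A

/-- `A` is a weighted graph adjacency matrix: symmetric, nonnegative, zero diagonal. -/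
def IsWeightedGraph {n : ℕ} (A : Matrix (Fin n) (Fin n) ℝ) : Prop :=
  A.IsSymm ∧ (∀ i j, 0 ≤ A i j) ∧ (∀ i, A i i = 0)

/-- The graph with edge set `{(i,j) : A i j > 0}` is connected. -/
def GraphConnected {n : ℕ} (A : Matrix (Fin n) (Fin n) ℝ) : Prop :=
  (SimpleGraph.fromRel (fun i j => 0 < A i j)).Connected

/-- `LH` is the Laplacian of a `(1±ε)`-spectral sparsifier of the graph with Laplacian `LG`. -/
def IsSparsifier {n : ℕ} (LG LH : Matrix (Fin n) (Fin n) ℝ) (ε : ℝ) : Prop :=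
  ∀ x : Fin n → ℝ,
    (1 - ε) * (x ⬝ᵥ LG.mulVec x) ≤ x ⬝ᵥ LH.mulVec x ∧
    x ⬝ᵥ LH.mulVec x ≤ (1 + ε) * (x ⬝ᵥ LG.mulVec x)

/-- Orthogonal projection `I - (1/n)·1·1ᵀ` onto `F = {f : ⟨f,1⟩ = 0}`. -/
def PF (n : ℕ) : Matrix (Fin n) (Fin n) ℝ :=
  1 - (n : ℝ)⁻¹ • Matrix.of (fun _ _ => (1 : ℝ))

/-- Diagonal 0/1 matrix selecting the coordinates in `S`. -/
def IS {n : ℕ} (S : Finset (Fin n)) : Matrix (Fin n) (Fin n) ℝ :=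
  Matrix.diagonal (fun i => if i ∈ S then (1 : ℝ) else 0)

/-- Euclidean norm of a vector. -/
def vnorm {n : ℕ} (x : Fin n → ℝ) : ℝ := Real.sqrt (∑ i, (x i) ^ 2)

/-- `lam` is the smallest eigenvalue of `L` restricted to `F = {x : ⟨x,1⟩ = 0}`, i.e. the
minimum of the Rayleigh quotient over nonzero vectors of `F`. -/
def IsLam1 {n : ℕ} (L : Matrix (Fin n) (Fin n) ℝ) (lam : ℝ) : Prop :=
  IsLeast {r | ∃ x : Fin n → ℝ, x ≠ 0 ∧ (∑ i, x i) = 0 ∧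
    r = (x ⬝ᵥ L.mulVec x) / (∑ i, (x i) ^ 2)} lam

/-- `lam` is the largest eigenvalue of `L`: the maximum of the Rayleigh quotient. -/
def IsLamN {n : ℕ} (L : Matrix (Fin n) (Fin n) ℝ) (lam : ℝ) : Prop :=
  IsGreatest {r | ∃ x : Fin n → ℝ, x ≠ 0 ∧
    r = (x ⬝ᵥ L.mulVec x) / (∑ i, (x i) ^ 2)} lam

/-- `Lp` is the Moore–Penrose pseudoinverse of `L`. -/
def IsMoorePenrose {n : ℕ} (L Lp : Matrix (Fin n) (Fin n) ℝ) : Prop :=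
  L * Lp * L = L ∧ Lp * L * Lp = Lp ∧ (L * Lp).IsSymm ∧ (Lp * L).IsSymm

/-- The stability constant `β` of sparse-HFS. -/
def betaHFS (l : ℕ) (γ ε lam1 k : ℝ) : ℝ :=
  1.5 * k * Real.sqrt l / ((l : ℝ) * γ * (1 - ε) * lam1 - 1) ^ 2 +
  Real.sqrt 2 * k / ((l : ℝ) * γ * (1 - ε) * lam1 - 1)

/-- `π(l,u) = (lu/(l+u-0.5))·(1/(1 - 1/(2·max{l,u})))`. -/
def piLU (l u : ℕ) : ℝ :=
  ((l : ℝ) * u / ((l : ℝ) + u - 0.5)) * (1 / (1 - 1 / (2 * ((max l u : ℕ) : ℝ))))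

lemma dotProduct_Lap_mulVec {n : ℕ} (A : Matrix (Fin n) (Fin n) ℝ) (x : Fin n → ℝ) :
    x ⬝ᵥ (Lap A).mulVec x = ∑ i, ∑ j, A i j * x i * (x i - x j) := by
  rw [Lap, sub_mulVec, dotProduct_sub]
  simp only [dotProduct, mulVec_diagonal]
  simp only [mulVec, dotProduct, Finset.mul_sum, Finset.sum_mul, ← Finset.sum_sub_distrib]
  exact Finset.sum_congr rfl fun i _ => Finset.sum_congr rfl fun j _ => by ring

lemma two_mul_dotProduct_Lap_mulVec {n : ℕ} {A : Matrix (Fin n) (Fin n) ℝ} (hA : A.IsSymm)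
    (x : Fin n → ℝ) :
    2 * (x ⬝ᵥ (Lap A).mulVec x) = ∑ i, ∑ j, A i j * (x i - x j) ^ 2 := by
  have hswap :
      ∑ i, ∑ j, A i j * x i * (x i - x j) = ∑ i, ∑ j, A i j * x j * (x j - x i) := by
    rw [Finset.sum_comm]
    exact Finset.sum_congr rfl fun i _ => Finset.sum_congr rfl fun j _ => by rw [hA.apply i j]
  rw [two_mul, dotProduct_Lap_mulVec]
  nth_rewrite 2 [hswap]
  rw [← Finset.sum_add_distrib]
  refine Finset.sum_congr rfl fun i _ => ?_
  rw [← Finset.sum_add_distrib]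
  exact Finset.sum_congr rfl fun j _ => by ring

lemma dotProduct_Lap_mulVec_nonneg {n : ℕ} {A : Matrix (Fin n) (Fin n) ℝ} (hA : A.IsSymm)
    (hA₀ : ∀ i j, 0 ≤ A i j) (x : Fin n → ℝ) : 0 ≤ x ⬝ᵥ (Lap A).mulVec x := by
  have h := two_mul_dotProduct_Lap_mulVec hA x
  have : 0 ≤ ∑ i, ∑ j, A i j * (x i - x j) ^ 2 :=
    Finset.sum_nonneg fun i _ => Finset.sum_nonneg fun j _ => mul_nonneg (hA₀ i j) (sq_nonneg _)
  linarith

lemma dotProduct_IS_mulVec_nonneg {n : ℕ} (S : Finset (Fin n)) (x : Fin n → ℝ) :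
    0 ≤ x ⬝ᵥ (IS S).mulVec x := by
  simp only [IS, dotProduct, mulVec_diagonal]
  refine Finset.sum_nonneg fun i _ => ?_
  split_ifs <;> nlinarith [sq_nonneg (x i)]

lemma dotProduct_PF_mulVec {n : ℕ} {x : Fin n → ℝ} (hx : ∑ i, x i = 0) (y : Fin n → ℝ) :
    x ⬝ᵥ (PF n).mulVec y = x ⬝ᵥ y := by
  have hJ : x ⬝ᵥ (Matrix.of fun _ _ => (1 : ℝ)).mulVec y = 0 := by
    simp [dotProduct, mulVec, ← Finset.sum_mul, hx]
  rw [PF, sub_mulVec, dotProduct_sub, one_mulVec, smul_mulVec, dotProduct_smul, hJ, smul_zero,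
    sub_zero]

lemma IsLam1.nonneg {n : ℕ} {L : Matrix (Fin n) (Fin n) ℝ} {lam : ℝ}
    (hL : ∀ x, 0 ≤ x ⬝ᵥ L.mulVec x) (hlam : IsLam1 L lam) : 0 ≤ lam := by
  obtain ⟨x, -, -, rfl⟩ := hlam.1
  exact div_nonneg (hL x) (Finset.sum_nonneg fun i _ => sq_nonneg _)

lemma IsLam1.mul_sum_sq_le {n : ℕ} {L : Matrix (Fin n) (Fin n) ℝ} {lam : ℝ}
    (hlam : IsLam1 L lam) {x : Fin n → ℝ} (hx : ∑ i, x i = 0) :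
    lam * ∑ i, x i ^ 2 ≤ x ⬝ᵥ L.mulVec x := by
  rcases eq_or_ne x 0 with rfl | hx0
  · simp
  have hpos : 0 < ∑ i, x i ^ 2 := by
    obtain ⟨i, hi⟩ := Function.ne_iff.mp hx0
    exact Finset.sum_pos' (fun j _ => sq_nonneg _) ⟨i, Finset.mem_univ _, sq_pos_of_ne_zero hi⟩
  exact (le_div_iff₀ hpos).mp (hlam.2 ⟨x, hx0, hx, rfl⟩)

lemma vnorm_nonneg {n : ℕ} (x : Fin n → ℝ) : 0 ≤ vnorm x := Real.sqrt_nonneg _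

lemma dotProduct_le_vnorm_mul_vnorm {n : ℕ} (x y : Fin n → ℝ) :
    x ⬝ᵥ y ≤ vnorm x * vnorm y :=
  Real.sum_mul_le_sqrt_mul_sqrt _ x y

lemma mul_vnorm_le_of_mul_sum_sq_le {n : ℕ} {c : ℝ} {x y : Fin n → ℝ}
    (h : c * ∑ i, x i ^ 2 ≤ x ⬝ᵥ y) : c * vnorm x ≤ vnorm y := by
  have hsq : vnorm x * vnorm x = ∑ i, x i ^ 2 :=
    Real.mul_self_sqrt (Finset.sum_nonneg fun i _ => sq_nonneg _)
  rcases (vnorm_nonneg x).eq_or_lt with h0 | hpos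
  · rw [← h0, mul_zero]; exact vnorm_nonneg y
  refine le_of_mul_le_mul_left ?_ hpos
  calc vnorm x * (c * vnorm x) = c * ∑ i, x i ^ 2 := by rw [← hsq]; ring
    _ ≤ x ⬝ᵥ y := h
    _ ≤ vnorm x * vnorm y := dotProduct_le_vnorm_mul_vnorm x y

lemma IsSparsifier.mul_sum_sq_le_dotProduct_mulVec {n : ℕ} {LG LH : Matrix (Fin n) (Fin n) ℝ}
    {ε lam t : ℝ} (hsp : IsSparsifier LG LH ε) (hε : ε ≤ 1) (ht : 0 ≤ t)
    (hlam : IsLam1 LG lam) (S : Finset (Fin n)) {x : Fin n → ℝ} (hx : ∑ i, x i = 0) :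
    t * (1 - ε) * lam * ∑ i, x i ^ 2 ≤ x ⬝ᵥ (t • LH + IS S).mulVec x := by
  rw [add_mulVec, dotProduct_add, smul_mulVec, dotProduct_smul, smul_eq_mul]
  calc t * (1 - ε) * lam * ∑ i, x i ^ 2 = t * ((1 - ε) * (lam * ∑ i, x i ^ 2)) := by ring
    _ ≤ t * ((1 - ε) * (x ⬝ᵥ LG.mulVec x)) := by
      gcongr
      exact hlam.mul_sum_sq_le hx
    _ ≤ t * (x ⬝ᵥ LH.mulVec x) := by gcongr; exact (hsp x).1
    _ ≤ t * (x ⬝ᵥ LH.mulVec x) + x ⬝ᵥ (IS S).mulVec x :=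
      le_add_of_nonneg_right (dotProduct_IS_mulVec_nonneg S x)

theorem stmt_3_general {n : ℕ}
    (AG AH : Matrix (Fin n) (Fin n) ℝ)
    (hG : IsWeightedGraph AG)
    (ε : ℝ)
    (hsp : IsSparsifier (Lap AG) (Lap AH) ε)
    (γ : ℝ) (hγ : 0 < γ)
    (l : ℕ)
    (S : Finset (Fin n))
    (lam1 : ℝ) (hlam1 : IsLam1 (Lap AG) lam1)
    (f : Fin n → ℝ) (hf : ∑ i, f i = 0) :
    vnorm ((PF n).mulVec ((((l : ℝ) * γ) • Lap AH + IS S).mulVec f)) ≥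
      ((l : ℝ) * γ * (1 - ε) * lam1 - 1) * vnorm f := by
  have hlγ : 0 ≤ (l : ℝ) * γ := by positivity
  have hbound : (l : ℝ) * γ * (1 - ε) * lam1 * vnorm f ≤
      vnorm ((PF n).mulVec ((((l : ℝ) * γ) • Lap AH + IS S).mulVec f)) := by
    rcases le_or_gt ε 1 with hε1 | hε1
    · apply mul_vnorm_le_of_mul_sum_sq_le
      rw [dotProduct_PF_mulVec hf]
      exact hsp.mul_sum_sq_le_dotProduct_mulVec hε1 hlγ hlam1 S hf
    · have hc : (l : ℝ) * γ * (1 - ε) * lam1 ≤ 0 :=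
        mul_nonpos_of_nonpos_of_nonneg (mul_nonpos_of_nonneg_of_nonpos hlγ (by linarith))
          (hlam1.nonneg (dotProduct_Lap_mulVec_nonneg hG.1 hG.2.1))
      exact (mul_nonpos_of_nonpos_of_nonneg hc (vnorm_nonneg f)).trans (vnorm_nonneg _)
  linarith [vnorm_nonneg f]

/-- lower bound on the norm of `P_F((lγ·L_H + I_S)·f)` for `f ∈ F`. -/
theorem stmt_3 {n : ℕ} (hn : 2 ≤ n)
    (AG AH : Matrix (Fin n) (Fin n) ℝ)
    (hG : IsWeightedGraph AG) (hGc : GraphConnected AG)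
    (hH : IsWeightedGraph AH)
    (ε : ℝ) (hε : 0 ≤ ε)
    (hsp : IsSparsifier (Lap AG) (Lap AH) ε)
    (γ : ℝ) (hγ : 0 < γ)
    (l : ℕ) (hl : 1 ≤ l)
    (S : Finset (Fin n))
    (lam1 : ℝ) (hlam1 : IsLam1 (Lap AG) lam1)
    (f : Fin n → ℝ) (hf : ∑ i, f i = 0) :
    vnorm ((PF n).mulVec ((((l : ℝ) * γ) • Lap AH + IS S).mulVec f)) ≥
      ((l : ℝ) * γ * (1 - ε) * lam1 - 1) * vnorm f :=
  stmt_3_general AG AH hG ε hsp γ hγ l S lam1 hlam1 f hf
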